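/- Fix real parameters α, γ, δ, ε > 0, let β₁ be the unique solution of g(β₁) = 1 on (1/ε, ∞) and β_c > β₁ the unique solution of F(β_c) = 1 on (β₁, ∞). Then for every β > β_c and every Z ≥ P₃₄(β), all the series Σ₁(Z,β), Σ₂(Z,β), Σ₃(Z,β) converge, Σ₂(Z,β)·Σ₃(Z,β) < 1, and λ(Z,β) = Σ₁(Z,β) + Σ₂(Z,β)·e^{-αβ-Z}/(1 - Σ₂(Z,β)·Σ₃(Z,β)) < 1. (Second part of Lemma 2: for β > β_c the spectral radius of the induced operator on [1] is strictly less than 1 for all Z ≥ P₃₄(β), so the implicit equation λ = 1 has no solution.) -/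
import Mathlib


open Filter

/-- `P₃₄(β) = γβ + log(1 + e^{δβ})`. -/
noncomputable def P34 (γ δ β : ℝ) : ℝ := γ * β + Real.log (1 + Real.exp (δ * β))

/-- `Σ₁(Z,β) = ∑_{n=1}^∞ e^{-n(αβ+Z)}` (indexed by `n : ℕ` via `n ↦ n+1`). -/
noncomputable def S1 (α β Z : ℝ) : ℝ := ∑' n : ℕ, Real.exp (-((n : ℝ) + 1) * (α * β + Z))

/-- `Σ₂(Z,β) = ∑_{n=1}^∞ (n+1)^{-β} e^{-nZ}`. -/
noncomputable def S2 (β Z : ℝ) : ℝ :=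
  ∑' n : ℕ, ((n : ℝ) + 2) ^ (-β) * Real.exp (-((n : ℝ) + 1) * Z)

/-- `Σ₃(Z,β) = (1+e^{δβ})^{-2} ∑_{n=1}^∞ (n+1)^{-εβ} e^{n(P₃₄(β)-Z)}`. -/
noncomputable def S3 (γ δ ε β Z : ℝ) : ℝ :=
  (∑' n : ℕ, ((n : ℝ) + 2) ^ (-(ε * β)) * Real.exp (((n : ℝ) + 1) * (P34 γ δ β - Z))) /
    (1 + Real.exp (δ * β)) ^ 2

/-- `g(β) = Σ₂(P₃₄(β),β)·Σ₃(P₃₄(β),β)`. -/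
noncomputable def g (γ δ ε β : ℝ) : ℝ := S2 β (P34 γ δ β) * S3 γ δ ε β (P34 γ δ β)

/-- `F(β) = Σ₁(P₃₄(β),β) + Σ₂(P₃₄(β),β)·e^{-αβ-P₃₄(β)}/(1 - g(β))`. -/
noncomputable def F (α γ δ ε β : ℝ) : ℝ :=
  S1 α β (P34 γ δ β) +
    S2 β (P34 γ δ β) * Real.exp (-(α * β) - P34 γ δ β) / (1 - g γ δ ε β)

/-- `λ(Z,β) = Σ₁(Z,β) + Σ₂(Z,β)·e^{-αβ-Z}/(1 - Σ₂(Z,β)·Σ₃(Z,β))`. -/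
noncomputable def lam (α γ δ ε β Z : ℝ) : ℝ :=
  S1 α β Z + S2 β Z * Real.exp (-(α * β) - Z) / (1 - S2 β Z * S3 γ δ ε β Z)


section helpers

open Real

lemma geom_summable {c : ℝ} (hc : 0 < c) :
    Summable (fun n : ℕ => Real.exp (-((n : ℝ) + 1) * c)) := by
  have h : ∀ n : ℕ, Real.exp (-((n : ℝ) + 1) * c)
      = Real.exp (-c) * Real.exp (-c) ^ n := by
    intro n
    rw [← Real.exp_nat_mul, ← Real.exp_add]
    ring_nf
  have hs := (summable_geometric_of_lt_one (Real.exp_nonneg (-c))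
      (by rwa [Real.exp_lt_one_iff, neg_lt_zero])).mul_left (Real.exp (-c))
  exact hs.congr fun n => (h n).symm

lemma T1_le {c c' : ℝ} (hc : 0 < c) (h : c ≤ c') :
    (∑' n : ℕ, Real.exp (-((n : ℝ) + 1) * c')) ≤ ∑' n : ℕ, Real.exp (-((n : ℝ) + 1) * c) := by
  refine Summable.tsum_le_tsum (fun n => Real.exp_le_exp.mpr ?_) (geom_summable (hc.trans_le h))
    (geom_summable hc)
  have : (0:ℝ) ≤ (n:ℝ) := Nat.cast_nonneg n
  nlinarith

lemma T1_lt {c c' : ℝ} (hc : 0 < c) (h : c < c') :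
    (∑' n : ℕ, Real.exp (-((n : ℝ) + 1) * c')) < ∑' n : ℕ, Real.exp (-((n : ℝ) + 1) * c) := by
  refine Summable.tsum_lt_tsum_of_nonneg (fun n => (Real.exp_nonneg _))
    (fun n => Real.exp_le_exp.mpr ?_) (i := 0) (Real.exp_lt_exp.mpr (by norm_num; linarith))
    (geom_summable hc)
  have : (0:ℝ) ≤ (n:ℝ) := Nat.cast_nonneg n
  nlinarith

lemma T2_summable {β Z : ℝ} (hβ : 0 ≤ β) (hZ : 0 < Z) :
    Summable (fun n : ℕ => ((n : ℝ) + 2) ^ (-β) * Real.exp (-((n : ℝ) + 1) * Z)) := by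
  refine Summable.of_nonneg_of_le (fun n => by positivity) (fun n => ?_) (geom_summable hZ)
  have h1 : ((n : ℝ) + 2) ^ (-β) ≤ 1 :=
    Real.rpow_le_one_of_one_le_of_nonpos (by have := Nat.cast_nonneg (α := ℝ) n; linarith)
      (neg_nonpos.mpr hβ)
  exact mul_le_of_le_one_left (Real.exp_nonneg _) h1

lemma pow_summable {s : ℝ} (hs : 1 < s) :
    Summable (fun n : ℕ => ((n : ℝ) + 2) ^ (-s)) := by
  have h := (Real.summable_nat_rpow (p := -s)).mpr (by linarith)
  have h2 := h.comp_injective (add_left_injective 2)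
  refine h2.congr fun n => ?_
  simp only [Function.comp]
  norm_num

lemma T3_summable {s t : ℝ} (hs : 1 < s) (ht : t ≤ 0) :
    Summable (fun n : ℕ => ((n : ℝ) + 2) ^ (-s) * Real.exp (((n : ℝ) + 1) * t)) := by
  refine Summable.of_nonneg_of_le (fun n => by positivity) (fun n => ?_) (pow_summable hs)
  refine mul_le_of_le_one_right (Real.rpow_nonneg (by positivity) _) ?_
  rw [Real.exp_le_one_iff]
  have : (0:ℝ) ≤ (n:ℝ) := Nat.cast_nonneg n
  nlinarith

lemma T2_le {β β' Z Z' : ℝ} (hβ : 0 ≤ β) (hZ : 0 < Z) (hb : β ≤ β') (hz : Z ≤ Z') :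
    (∑' n : ℕ, ((n : ℝ) + 2) ^ (-β') * Real.exp (-((n : ℝ) + 1) * Z'))
      ≤ ∑' n : ℕ, ((n : ℝ) + 2) ^ (-β) * Real.exp (-((n : ℝ) + 1) * Z) := by
  refine Summable.tsum_le_tsum (fun n => ?_) (T2_summable (hβ.trans hb) (hZ.trans_le hz))
    (T2_summable hβ hZ)
  have hn : (0:ℝ) ≤ (n:ℝ) := Nat.cast_nonneg n
  refine mul_le_mul (Real.rpow_le_rpow_of_exponent_le (by linarith) (by linarith))
    (Real.exp_le_exp.mpr (by nlinarith)) (Real.exp_nonneg _) (Real.rpow_nonneg (by linarith) _)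

lemma T2_lt {β β' Z Z' : ℝ} (hβ : 0 ≤ β) (hZ : 0 < Z) (hb : β < β') (hz : Z ≤ Z') :
    (∑' n : ℕ, ((n : ℝ) + 2) ^ (-β') * Real.exp (-((n : ℝ) + 1) * Z'))
      < ∑' n : ℕ, ((n : ℝ) + 2) ^ (-β) * Real.exp (-((n : ℝ) + 1) * Z) := by
  refine Summable.tsum_lt_tsum_of_nonneg (fun n => by positivity) (fun n => ?_) (i := 0) ?_
    (T2_summable hβ hZ)
  · have hn : (0:ℝ) ≤ (n:ℝ) := Nat.cast_nonneg n
    refine mul_le_mul (Real.rpow_le_rpow_of_exponent_le (by linarith) (by linarith))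
      (Real.exp_le_exp.mpr (by nlinarith)) (Real.exp_nonneg _) (Real.rpow_nonneg (by linarith) _)
  · norm_num
    refine mul_lt_mul (Real.rpow_lt_rpow_of_exponent_lt (by norm_num) (by linarith))
      (Real.exp_le_exp.mpr (by norm_num; linarith)) (Real.exp_pos _)
      (Real.rpow_nonneg (by norm_num) _)

lemma T2_pos {β Z : ℝ} (hβ : 0 ≤ β) (hZ : 0 < Z) :
    0 < ∑' n : ℕ, ((n : ℝ) + 2) ^ (-β) * Real.exp (-((n : ℝ) + 1) * Z) :=
  Summable.tsum_pos (T2_summable hβ hZ) (fun n => by positivity) 0 (by positivity)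

lemma T3_le {s s' t t' : ℝ} (hs : 1 < s) (ht : t ≤ 0) (hss : s ≤ s') (htt : t' ≤ t) :
    (∑' n : ℕ, ((n : ℝ) + 2) ^ (-s') * Real.exp (((n : ℝ) + 1) * t'))
      ≤ ∑' n : ℕ, ((n : ℝ) + 2) ^ (-s) * Real.exp (((n : ℝ) + 1) * t) := by
  refine Summable.tsum_le_tsum (fun n => ?_) (T3_summable (hs.trans_le hss) (htt.trans ht))
    (T3_summable hs ht)
  have hn : (0:ℝ) ≤ (n:ℝ) := Nat.cast_nonneg n
  refine mul_le_mul (Real.rpow_le_rpow_of_exponent_le (by linarith) (by linarith))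
    (Real.exp_le_exp.mpr (by nlinarith)) (Real.exp_nonneg _) (Real.rpow_nonneg (by linarith) _)

lemma T3_pos {s t : ℝ} (hs : 1 < s) (ht : t ≤ 0) :
    0 < ∑' n : ℕ, ((n : ℝ) + 2) ^ (-s) * Real.exp (((n : ℝ) + 1) * t) :=
  Summable.tsum_pos (T3_summable hs ht) (fun n => by positivity) 0 (by positivity)

end helpers

section main

lemma P34_pos {γ δ b : ℝ} (hγ : 0 < γ) (hb : 0 < b) : 0 < P34 γ δ b := by
  have h1 : 0 < Real.log (1 + Real.exp (δ * b)) :=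
    Real.log_pos (by have := Real.exp_pos (δ * b); linarith)
  unfold P34; nlinarith

lemma P34_lt {γ δ b b' : ℝ} (hγ : 0 < γ) (hδ : 0 < δ) (h : b < b') :
    P34 γ δ b < P34 γ δ b' := by
  unfold P34
  have h1 : Real.exp (δ * b) < Real.exp (δ * b') :=
    Real.exp_lt_exp.mpr (by nlinarith)
  have h2 : Real.log (1 + Real.exp (δ * b)) < Real.log (1 + Real.exp (δ * b')) :=
    Real.log_lt_log (by have := Real.exp_pos (δ * b); linarith) (by linarith)
  nlinarith

theorem stmt_8' (α γ δ ε : ℝ) (hα : 0 < α) (hγ : 0 < γ) (hδ : 0 < δ) (hε : 0 < ε)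
    (β₁ : ℝ) (hβ₁ : 1 / ε < β₁) (hgβ₁ : g γ δ ε β₁ = 1)
    (hβ₁uniq : ∀ b, 1 / ε < b → g γ δ ε b = 1 → b = β₁)
    (βc : ℝ) (hβc : β₁ < βc) (hFβc : F α γ δ ε βc = 1)
    (hβcuniq : ∀ b, β₁ < b → F α γ δ ε b = 1 → b = βc) :
    ∀ β, βc < β → ∀ Z, P34 γ δ β ≤ Z →
      Summable (fun n : ℕ => Real.exp (-((n : ℝ) + 1) * (α * β + Z))) ∧
      Summable (fun n : ℕ => ((n : ℝ) + 2) ^ (-β) * Real.exp (-((n : ℝ) + 1) * Z)) ∧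
      Summable (fun n : ℕ =>
        ((n : ℝ) + 2) ^ (-(ε * β)) * Real.exp (((n : ℝ) + 1) * (P34 γ δ β - Z))) ∧
      S2 β Z * S3 γ δ ε β Z < 1 ∧
      lam α γ δ ε β Z < 1 := by
  intro β hβ Z hZ
  have hεinv : (0:ℝ) < 1 / ε := by positivity
  have hβ₁pos : 0 < β₁ := hεinv.trans hβ₁
  have hβcpos : 0 < βc := hβ₁pos.trans hβc
  have hβpos : 0 < β := hβcpos.trans hβ
  -- ε·b > 1 facts
  have hεb : ∀ b : ℝ, 1 / ε < b → 1 < ε * b := by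
    intro b hb
    rw [div_lt_iff₀ hε] at hb
    nlinarith
  have hβc' : 1 / ε < βc := hβ₁.trans hβc
  have hβ' : 1 / ε < β := hβc'.trans hβ
  -- P34 positivity
  have hA : 0 < P34 γ δ β := P34_pos hγ hβpos
  have hZpos : 0 < Z := hA.trans_le hZ
  -- denominators of S3
  have hD : ∀ b : ℝ, 0 < (1 + Real.exp (δ * b)) ^ 2 := by
    intro b; have := Real.exp_pos (δ * b); positivity
  have hDle : ∀ b b' : ℝ, b ≤ b' →
      (1 + Real.exp (δ * b)) ^ 2 ≤ (1 + Real.exp (δ * b')) ^ 2 := by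
    intro b b' hbb
    have h1 : Real.exp (δ * b) ≤ Real.exp (δ * b') :=
      Real.exp_le_exp.mpr (by nlinarith)
    have := Real.exp_pos (δ * b)
    nlinarith
  -- S3 positivity (for Z' ≥ P34 b, 1/ε < b)
  have hS3pos : ∀ b Z' : ℝ, 1 / ε < b → P34 γ δ b ≤ Z' → 0 < S3 γ δ ε b Z' := by
    intro b Z' hb hZ'
    exact div_pos (T3_pos (hεb b hb) (by linarith)) (hD b)
  have hS2pos : ∀ b Z' : ℝ, 0 < b → 0 < Z' → 0 < S2 b Z' := by
    intro b Z' hb hZ'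
    exact T2_pos hb.le hZ'
  -- key monotonicity of g
  have key_g : ∀ b b', 1 / ε < b → b < b' → g γ δ ε b' < g γ δ ε b := by
    intro b b' hb hbb'
    have hbpos : 0 < b := hεinv.trans hb
    have hb'pos : 0 < b' := hbpos.trans hbb'
    have hPb : 0 < P34 γ δ b := P34_pos hγ hbpos
    have hPb' : 0 < P34 γ δ b' := P34_pos hγ hb'pos
    have hPlt : P34 γ δ b < P34 γ δ b' := P34_lt hγ hδ hbb'
    have h2 : S2 b' (P34 γ δ b') < S2 b (P34 γ δ b) :=
      T2_lt hbpos.le hPb hbb' hPlt.le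
    have h3 : S3 γ δ ε b' (P34 γ δ b') ≤ S3 γ δ ε b (P34 γ δ b) := by
      unfold S3
      refine div_le_div₀ (le_of_lt (T3_pos (hεb b hb) (by simp)))
        (T3_le (hεb b hb) (by simp) (by nlinarith) (by simp)) (hD b) (hDle b b' hbb'.le)
    exact mul_lt_mul h2 h3 (hS3pos b' (P34 γ δ b') (hb.trans hbb') le_rfl)
      (hS2pos b (P34 γ δ b) hbpos hPb).le
  have hgβc : g γ δ ε βc < 1 := hgβ₁ ▸ key_g β₁ βc hβ₁ hβc
  have hgβ : g γ δ ε β < 1 := hgβ₁ ▸ key_g β₁ β hβ₁ (hβc.trans hβ)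
  -- S2·S3 at Z bounded by g β
  have hS2le : S2 β Z ≤ S2 β (P34 γ δ β) := T2_le hβpos.le hA le_rfl hZ
  have hS3le : S3 γ δ ε β Z ≤ S3 γ δ ε β (P34 γ δ β) := by
    unfold S3
    refine div_le_div₀ (le_of_lt (T3_pos (hεb β hβ') (by simp)))
      (T3_le (hεb β hβ') (by simp) le_rfl (by linarith)) (hD β) le_rfl
  have hprodle : S2 β Z * S3 γ δ ε β Z ≤ g γ δ ε β := by
    unfold g
    exact mul_le_mul hS2le hS3le (hS3pos β Z hβ' hZ).le
      (hS2pos β (P34 γ δ β) hβpos hA).le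
  have hprod : S2 β Z * S3 γ δ ε β Z < 1 := hprodle.trans_lt hgβ
  -- F strictly decreasing between βc and β
  have hAc : 0 < P34 γ δ βc := P34_pos hγ hβcpos
  have hPltc : P34 γ δ βc < P34 γ δ β := P34_lt hγ hδ hβ
  have hF : F α γ δ ε β < F α γ δ ε βc := by
    unfold F S1
    have h1 : (∑' n : ℕ, Real.exp (-((n : ℝ) + 1) * (α * β + P34 γ δ β)))
        < ∑' n : ℕ, Real.exp (-((n : ℝ) + 1) * (α * βc + P34 γ δ βc)) :=
      T1_lt (by positivity) (by nlinarith)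
    have hnum : S2 β (P34 γ δ β) * Real.exp (-(α * β) - P34 γ δ β)
        ≤ S2 βc (P34 γ δ βc) * Real.exp (-(α * βc) - P34 γ δ βc) := by
      refine mul_le_mul (T2_le hβcpos.le hAc hβ.le hPltc.le)
        (Real.exp_le_exp.mpr (by nlinarith)) (Real.exp_nonneg _)
        (hS2pos βc (P34 γ δ βc) hβcpos hAc).le
    have hfrac : S2 β (P34 γ δ β) * Real.exp (-(α * β) - P34 γ δ β) / (1 - g γ δ ε β)
        ≤ S2 βc (P34 γ δ βc) * Real.exp (-(α * βc) - P34 γ δ βc) / (1 - g γ δ ε βc) := by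
      refine div_le_div₀ (le_of_lt (mul_pos (hS2pos βc (P34 γ δ βc) hβcpos hAc)
        (Real.exp_pos _))) hnum (by linarith) (by linarith [key_g βc β hβc' hβ])
    exact add_lt_add_of_lt_of_le h1 hfrac
  -- lam ≤ F β
  have hlam : lam α γ δ ε β Z ≤ F α γ δ ε β := by
    unfold lam F S1
    have h1 : (∑' n : ℕ, Real.exp (-((n : ℝ) + 1) * (α * β + Z)))
        ≤ ∑' n : ℕ, Real.exp (-((n : ℝ) + 1) * (α * β + P34 γ δ β)) :=
      T1_le (by positivity) (by linarith)
    have hnum : S2 β Z * Real.exp (-(α * β) - Z)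
        ≤ S2 β (P34 γ δ β) * Real.exp (-(α * β) - P34 γ δ β) := by
      refine mul_le_mul hS2le (Real.exp_le_exp.mpr (by linarith)) (Real.exp_nonneg _)
        (hS2pos β (P34 γ δ β) hβpos hA).le
    have hfrac : S2 β Z * Real.exp (-(α * β) - Z) / (1 - S2 β Z * S3 γ δ ε β Z)
        ≤ S2 β (P34 γ δ β) * Real.exp (-(α * β) - P34 γ δ β) / (1 - g γ δ ε β) := by
      refine div_le_div₀ (le_of_lt (mul_pos (hS2pos β (P34 γ δ β) hβpos hA)
        (Real.exp_pos _))) hnum (by linarith) (by linarith)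
    exact add_le_add h1 hfrac
  exact ⟨geom_summable (by positivity), T2_summable hβpos.le hZpos,
    T3_summable (hεb β hβ') (by linarith), hprod,
    lt_of_le_of_lt hlam (hFβc ▸ hF)⟩

end main

/-- Second part of Lemma 2: with `β₁` the unique solution of `g = 1` on `(1/ε,∞)` and
`β_c > β₁` the unique solution of `F = 1` on `(β₁,∞)`, for every `β > β_c` and every
`Z ≥ P₃₄(β)` all the series `Σ₁, Σ₂, Σ₃` converge, `Σ₂·Σ₃ < 1`, and `λ(Z,β) < 1`. -/
theorem stmt_8 (α γ δ ε : ℝ) (hα : 0 < α) (hγ : 0 < γ) (hδ : 0 < δ) (hε : 0 < ε)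
    (β₁ : ℝ) (hβ₁ : 1 / ε < β₁) (hgβ₁ : g γ δ ε β₁ = 1)
    (hβ₁uniq : ∀ b, 1 / ε < b → g γ δ ε b = 1 → b = β₁)
    (βc : ℝ) (hβc : β₁ < βc) (hFβc : F α γ δ ε βc = 1)
    (hβcuniq : ∀ b, β₁ < b → F α γ δ ε b = 1 → b = βc) :
    ∀ β, βc < β → ∀ Z, P34 γ δ β ≤ Z →
      Summable (fun n : ℕ => Real.exp (-((n : ℝ) + 1) * (α * β + Z))) ∧
      Summable (fun n : ℕ => ((n : ℝ) + 2) ^ (-β) * Real.exp (-((n : ℝ) + 1) * Z)) ∧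
      Summable (fun n : ℕ =>
        ((n : ℝ) + 2) ^ (-(ε * β)) * Real.exp (((n : ℝ) + 1) * (P34 γ δ β - Z))) ∧
      S2 β Z * S3 γ δ ε β Z < 1 ∧
      lam α γ δ ε β Z < 1 := by
  exact stmt_8' α γ δ ε hα hγ hδ hε β₁ hβ₁ hgβ₁ hβ₁uniq βc hβc hFβc hβcuniq
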